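/- Let u : I → ℝ be a C^∞ function on an open interval I with u(x) > 0 and u(x)² + x² > 0 on I, satisfying the ODE u''' = 3(u u'' + (u')² + 1)² / (u (u u' + x)) − 3 u' u'' / u + 8 x (u u' + x)⁴ (u² + x² + 1) / (u (u² + x²)), with u(x) u'(x) + x ≠ 0 on I. Suppose the function s(x) = x² + u(x)² is strictly monotone on I with C^∞ inverse g defined on J = s(I), and that 0 ∉ J. Then g satisfies the linear ODE g'''(t) = −((t + 1)/t) · g(t) on J. -/

import Mathlib

/-!
Differentiating `g ∘ s = id` three times gives the classical formula
`g''' ∘ s = (3 s''² - s' s''') / s'⁵` for the inverse function. For `s = x² + u²` one has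
`s' = 2P`, `s'' = 2Q`, `s''' = 2R` with `P = u u' + x`, `Q = u u'' + u'² + 1`,
`R = u u''' + 3 u' u''`, so `g''' ∘ s = (3Q² - PR) / (8P⁵)`, and the ODE for `u` says precisely
that `3Q² - PR = -8 x P⁵ (s + 1) / s`. Since `x = g (s x)`, this is the linear equation.

`J = s(I)` is an interval with more than one point (`s` is injective, having a left inverse),
hence a set of unique differentiability, which makes the derivatives of `g` within `J` meaningful.
-/

open Set

theorem Set.OrdConnected.uniqueDiffOn {s : Set ℝ} (hs : s.OrdConnected) (hnt : s.Nontrivial) :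
    UniqueDiffOn ℝ s := by
  obtain ⟨p, hp, q, hq, hpq⟩ := hnt.exists_lt
  refine uniqueDiffOn_convex hs.convex ⟨(p + q) / 2, interior_mono (hs.out hp hq) ?_⟩
  rw [interior_Icc]
  constructor <;> linarith

theorem uniqueDiffOn_image_of_leftInvOn {f g : ℝ → ℝ} {s : Set ℝ} (hs : IsPreconnected s)
    (hnt : s.Nontrivial) (hf : ContinuousOn f s) (hgf : LeftInvOn g f s) :
    UniqueDiffOn ℝ (f '' s) :=
  (hs.image f hf).ordConnected.uniqueDiffOn (hnt.image_of_injOn hgf.injOn)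

section IteratedDerivWithin

variable {s : Set ℝ} {f F F' : ℝ → ℝ} {x : ℝ} {n : WithTop ℕ∞} {k : ℕ}

theorem ContDiffOn.hasDerivWithinAt_iteratedDerivWithin (hf : ContDiffOn ℝ n f s) (hk : k < n)
    (hs : UniqueDiffOn ℝ s) (hx : x ∈ s) :
    HasDerivWithinAt (iteratedDerivWithin k f s) (iteratedDerivWithin (k + 1) f s x) s x := by
  rw [iteratedDerivWithin_succ]
  exact (hf.differentiableOn_iteratedDerivWithin hk hs x hx).hasDerivWithinAt

theorem ContDiffOn.hasDerivWithinAt_derivWithin (hf : ContDiffOn ℝ n f s) (hn : 1 < n)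
    (hs : UniqueDiffOn ℝ s) (hx : x ∈ s) :
    HasDerivWithinAt (derivWithin f s) (iteratedDerivWithin 2 f s x) s x := by
  simpa only [iteratedDerivWithin_one] using hf.hasDerivWithinAt_iteratedDerivWithin hn hs hx

theorem Set.EqOn.iteratedDerivWithin_succ (h : EqOn (iteratedDerivWithin k f s) F s)
    (hs : UniqueDiffOn ℝ s) (hF : ∀ y ∈ s, HasDerivWithinAt F (F' y) s y) :
    EqOn (iteratedDerivWithin (k + 1) f s) F' s := fun y hy => by
  rw [_root_.iteratedDerivWithin_succ, derivWithin_congr h (h hy)]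
  exact (hF y hy).derivWithin (hs y hy)

end IteratedDerivWithin

section InverseFunction

variable {I J : Set ℝ} {f g h φ : ℝ → ℝ} {x f' φ' : ℝ}

theorem derivWithin_eq_div_of_comp_eqOn (hI : UniqueDiffWithinAt ℝ I x) (hx : x ∈ I)
    (hIJ : MapsTo f I J) (hh : DifferentiableWithinAt ℝ h J (f x))
    (hf : HasDerivWithinAt f f' I x) (hf' : f' ≠ 0) (hφ : HasDerivWithinAt φ φ' I x)
    (hcomp : EqOn (h ∘ f) φ I) : derivWithin h J (f x) = φ' / f' := by
  have hcomp' := (hh.hasDerivWithinAt.comp x hf hIJ).congr (fun y hy => (hcomp hy).symm)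
    (hcomp hx).symm
  exact eq_div_of_mul_eq hf' (hI.eq_deriv _ hcomp' hφ)

theorem iteratedDerivWithin_three_comp_of_leftInvOn (hI : UniqueDiffOn ℝ I)
    (hJ : UniqueDiffOn ℝ J) (hIJ : MapsTo f I J) (hgf : LeftInvOn g f I)
    (hf : ContDiffOn ℝ 3 f I) (hg : ContDiffOn ℝ 3 g J) (hf' : ∀ y ∈ I, derivWithin f I y ≠ 0)
    (hx : x ∈ I) :
    iteratedDerivWithin 3 g J (f x) =
      (3 * iteratedDerivWithin 2 f I x ^ 2 - derivWithin f I x * iteratedDerivWithin 3 f I x) /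
        derivWithin f I x ^ 5 := by
  have hf0 : ∀ y ∈ I, HasDerivWithinAt f (derivWithin f I y) I y := fun y hy =>
    (hf.differentiableOn (by norm_num) y hy).hasDerivWithinAt
  have hf1 : ∀ y ∈ I, HasDerivWithinAt (derivWithin f I) (iteratedDerivWithin 2 f I y) I y :=
    fun y hy => hf.hasDerivWithinAt_derivWithin (by norm_num) hI hy
  have hf2 : ∀ y ∈ I,
      HasDerivWithinAt (iteratedDerivWithin 2 f I) (iteratedDerivWithin 3 f I y) I y :=
    fun y hy => hf.hasDerivWithinAt_iteratedDerivWithin (by norm_num) hI hy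
  have hgd : ∀ k < 3, DifferentiableOn ℝ (iteratedDerivWithin k g J) J := fun k hk =>
    hg.differentiableOn_iteratedDerivWithin (by exact_mod_cast hk) hJ
  have h1 : EqOn (derivWithin g J ∘ f) (fun y => (derivWithin f I y)⁻¹) I := fun y hy => by
    rw [Function.comp_apply, derivWithin_eq_div_of_comp_eqOn (hI y hy) hy hIJ
      (hg.differentiableOn (by norm_num) _ (hIJ hy)) (hf0 y hy) (hf' y hy)
      (hasDerivWithinAt_id y I) hgf, one_div]
  have h2 : EqOn (iteratedDerivWithin 2 g J ∘ f)
      (fun y => -iteratedDerivWithin 2 f I y / derivWithin f I y ^ 3) I := fun y hy => by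
    rw [Function.comp_apply, iteratedDerivWithin_succ, iteratedDerivWithin_one,
      derivWithin_eq_div_of_comp_eqOn (hI y hy) hy hIJ
        (by simpa using hgd 1 (by norm_num) _ (hIJ hy)) (hf0 y hy) (hf' y hy)
        ((hf1 y hy).inv (hf' y hy)) h1]
    ring
  rw [iteratedDerivWithin_succ, derivWithin_eq_div_of_comp_eqOn (hI x hx) hx hIJ
    (hgd 2 (by norm_num) _ (hIJ hx)) (hf0 x hx) (hf' x hx)
    ((hf2 x hx).fun_neg.div ((hf1 x hx).fun_pow 3) (pow_ne_zero 3 (hf' x hx))) h2]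
  have := hf' x hx
  field_simp
  ring

end InverseFunction

section SumOfSquares

variable {I : Set ℝ} {u : ℝ → ℝ}

theorem derivWithin_sq_add_sq (hI : UniqueDiffOn ℝ I) (hu : DifferentiableOn ℝ u I) :
    EqOn (derivWithin (fun y => y ^ 2 + u y ^ 2) I)
      (fun y => 2 * (u y * derivWithin u I y + y)) I := fun y hy => by
  refine ((((hasDerivAt_id' y).hasDerivWithinAt.fun_pow 2).fun_add
    ((hu y hy).hasDerivWithinAt.fun_pow 2)).congr_deriv ?_).derivWithin (hI y hy)
  push_cast
  ring

theorem iteratedDerivWithin_two_sq_add_sq (hI : UniqueDiffOn ℝ I) (hu : ContDiffOn ℝ 2 u I) :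
    EqOn (iteratedDerivWithin 2 (fun y => y ^ 2 + u y ^ 2) I)
      (fun y => 2 * (u y * iteratedDerivWithin 2 u I y + derivWithin u I y ^ 2 + 1)) I := by
  refine EqOn.iteratedDerivWithin_succ (k := 1)
    (F := fun y => 2 * (u y * derivWithin u I y + y)) ?_ hI fun y hy => ?_
  · rw [iteratedDerivWithin_one]
    exact derivWithin_sq_add_sq hI (hu.differentiableOn (by norm_num))
  · have hu0 := (hu.differentiableOn (by norm_num) y hy).hasDerivWithinAt
    have hu1 := hu.hasDerivWithinAt_derivWithin (by norm_num) hI hy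
    exact (((hu0.fun_mul hu1).fun_add (hasDerivWithinAt_id y I)).const_mul 2).congr_deriv
      (by ring)

theorem iteratedDerivWithin_three_sq_add_sq (hI : UniqueDiffOn ℝ I) (hu : ContDiffOn ℝ 3 u I) :
    EqOn (iteratedDerivWithin 3 (fun y => y ^ 2 + u y ^ 2) I)
      (fun y => 2 * (u y * iteratedDerivWithin 3 u I y +
        3 * derivWithin u I y * iteratedDerivWithin 2 u I y)) I := by
  refine (iteratedDerivWithin_two_sq_add_sq hI (hu.of_le (by norm_num))).iteratedDerivWithin_succ
    hI fun y hy => ?_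
  have hu0 := (hu.differentiableOn (by norm_num) y hy).hasDerivWithinAt
  have hu1 := hu.hasDerivWithinAt_derivWithin (by norm_num) hI hy
  have hu2 := hu.hasDerivWithinAt_iteratedDerivWithin (k := 2) (by norm_num) hI hy
  exact ((((hu0.fun_mul hu2).fun_add (hu1.fun_pow 2)).add_const 1).const_mul 2).congr_deriv
    (by push_cast; ring)

end SumOfSquares

theorem ode3_linearization_general (a b : ℝ) (u : ℝ → ℝ)
    (hu : ContDiffOn ℝ (⊤ : ℕ∞) u (Set.Ioo a b))
    (hupos : ∀ x ∈ Set.Ioo a b, 0 < u x)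
    (hne : ∀ x ∈ Set.Ioo a b, u x * derivWithin u (Set.Ioo a b) x + x ≠ 0)
    (hode : ∀ x ∈ Set.Ioo a b,
      iteratedDerivWithin 3 u (Set.Ioo a b) x =
        3 * (u x * iteratedDerivWithin 2 u (Set.Ioo a b) x
              + (derivWithin u (Set.Ioo a b) x) ^ 2 + 1) ^ 2 /
            (u x * (u x * derivWithin u (Set.Ioo a b) x + x))
          - 3 * derivWithin u (Set.Ioo a b) x * iteratedDerivWithin 2 u (Set.Ioo a b) x / u x
          + 8 * x * (u x * derivWithin u (Set.Ioo a b) x + x) ^ 4 *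
              ((u x) ^ 2 + x ^ 2 + 1) / (u x * ((u x) ^ 2 + x ^ 2)))
    (g : ℝ → ℝ)
    (hg : ContDiffOn ℝ (⊤ : ℕ∞) g ((fun x => x ^ 2 + (u x) ^ 2) '' Set.Ioo a b))
    (hgi : ∀ x ∈ Set.Ioo a b, g (x ^ 2 + (u x) ^ 2) = x)
    (h0 : (0 : ℝ) ∉ (fun x => x ^ 2 + (u x) ^ 2) '' Set.Ioo a b) :
    ∀ t ∈ (fun x => x ^ 2 + (u x) ^ 2) '' Set.Ioo a b,
      iteratedDerivWithin 3 g ((fun x => x ^ 2 + (u x) ^ 2) '' Set.Ioo a b) t =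
        -((t + 1) / t) * g t := by
  rintro t ⟨x, hx, rfl⟩
  have hI : UniqueDiffOn ℝ (Ioo a b) := isOpen_Ioo.uniqueDiffOn
  have hu3 : ContDiffOn ℝ 3 u (Ioo a b) := hu.of_le (WithTop.coe_le_coe.mpr le_top)
  have hs : ContDiffOn ℝ 3 (fun y => y ^ 2 + u y ^ 2) (Ioo a b) := by fun_prop
  have hJ : UniqueDiffOn ℝ ((fun y => y ^ 2 + u y ^ 2) '' Ioo a b) :=
    uniqueDiffOn_image_of_leftInvOn isPreconnected_Ioo (Ioo_infinite (hx.1.trans hx.2)).nontrivial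
      hs.continuousOn hgi
  have hs1 := derivWithin_sq_add_sq hI (hu3.differentiableOn (by norm_num))
  have hs1ne : ∀ y ∈ Ioo a b, derivWithin (fun y => y ^ 2 + u y ^ 2) (Ioo a b) y ≠ 0 :=
    fun y hy => by rw [hs1 hy]; exact mul_ne_zero two_ne_zero (hne y hy)
  rw [iteratedDerivWithin_three_comp_of_leftInvOn hI hJ (mapsTo_image _ _) hgi hs
    (hg.of_le (WithTop.coe_le_coe.mpr le_top)) hs1ne hx, hs1 hx,
    iteratedDerivWithin_two_sq_add_sq hI (hu3.of_le (by norm_num)) hx,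
    iteratedDerivWithin_three_sq_add_sq hI hu3 hx]
  beta_reduce
  rw [hgi x hx, hode x hx]
  have hS : x ^ 2 + u x ^ 2 ≠ 0 := fun h => h0 ⟨x, hx, h⟩
  have hu0 := (hupos x hx).ne'
  have hP := hne x hx
  field_simp
  ring

/-- The point transformation `x̂ = x² + u²`, `û = x` maps the nonlinear third-order ODE
`u''' = 3(u u'' + (u')² + 1)²/(u(u u' + x)) − 3 u' u''/u
       + 8x(u u' + x)⁴(u² + x² + 1)/(u(u² + x²))`
to the linear ODE `g''' = −((t+1)/t)·g`: if `g` is the smooth inverse of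
`s(x) = x² + u(x)²` then `g` solves the linear target equation on `J = s(I)`. -/
theorem ode3_linearization (a b : ℝ) (u : ℝ → ℝ)
    (hu : ContDiffOn ℝ (⊤ : ℕ∞) u (Set.Ioo a b))
    (hupos : ∀ x ∈ Set.Ioo a b, 0 < u x)
    (hsum : ∀ x ∈ Set.Ioo a b, 0 < (u x) ^ 2 + x ^ 2)
    (hne : ∀ x ∈ Set.Ioo a b, u x * derivWithin u (Set.Ioo a b) x + x ≠ 0)
    (hode : ∀ x ∈ Set.Ioo a b,
      iteratedDerivWithin 3 u (Set.Ioo a b) x =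
        3 * (u x * iteratedDerivWithin 2 u (Set.Ioo a b) x
              + (derivWithin u (Set.Ioo a b) x) ^ 2 + 1) ^ 2 /
            (u x * (u x * derivWithin u (Set.Ioo a b) x + x))
          - 3 * derivWithin u (Set.Ioo a b) x * iteratedDerivWithin 2 u (Set.Ioo a b) x / u x
          + 8 * x * (u x * derivWithin u (Set.Ioo a b) x + x) ^ 4 *
              ((u x) ^ 2 + x ^ 2 + 1) / (u x * ((u x) ^ 2 + x ^ 2)))
    (g : ℝ → ℝ)
    (hmono : StrictMonoOn (fun x => x ^ 2 + (u x) ^ 2) (Set.Ioo a b) ∨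
      StrictAntiOn (fun x => x ^ 2 + (u x) ^ 2) (Set.Ioo a b))
    (hg : ContDiffOn ℝ (⊤ : ℕ∞) g ((fun x => x ^ 2 + (u x) ^ 2) '' Set.Ioo a b))
    (hgi : ∀ x ∈ Set.Ioo a b, g (x ^ 2 + (u x) ^ 2) = x)
    (h0 : (0 : ℝ) ∉ (fun x => x ^ 2 + (u x) ^ 2) '' Set.Ioo a b) :
    ∀ t ∈ (fun x => x ^ 2 + (u x) ^ 2) '' Set.Ioo a b,
      iteratedDerivWithin 3 g ((fun x => x ^ 2 + (u x) ^ 2) '' Set.Ioo a b) t =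
        -((t + 1) / t) * g t :=
  ode3_linearization_general a b u hu hupos hne hode g hg hgi h0
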